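/- arXiv:2504.17327 — 2 statements merged into one kernel-verified Lean document; each statement's English description precedes it below -/
import Mathlib

section
/- Let G = (V, E) be a finite directed graph with a designated source s ∈ V from which every vertex is reachable, and let T ⊆ E be a spanning arborescence rooted at s (i.e., every vertex v ≠ s is reachable from s in T and has exactly one incoming T-edge, and s has none). Let L be a linear ordering of V ∖ {s} such that for every edge (u, v) ∈ T with u ≠ s, u precedes v in L. Then L is a linearization of (G, s): there exists a positive edge weighting w of G such that the weighted distances d_w(s, v) for v ∈ V ∖ {s} are pairwise distinct and L lists V ∖ {s} in increasing order of d_w(s, ·). -/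
variable {V : Type*}

/-- `p` is a directed walk from `s` to `v` in the digraph with edge relation `E`:
`p` is the (nonempty) list of visited vertices, starting at `s`, ending at `v`,
and each consecutive pair of vertices is an edge. -/
def IsWalk (E : V → V → Prop) (s v : V) (p : List V) : Prop :=
  p.Chain' E ∧ p.head? = some s ∧ p.getLast? = some v

/-- `v` is reachable from `s` by a directed walk. -/
def DiReachable (E : V → V → Prop) (s v : V) : Prop :=
  ∃ p, IsWalk E s v p

/-- Hop-distance from `s` to `v`: the minimum number of edges on a directed path
(equivalently, walk) from `s` to `v`.  A walk on `k + 1` vertices has `k` edges. -/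
noncomputable def hopDist (E : V → V → Prop) (s v : V) : ℕ :=
  sInf {k | ∃ p, IsWalk E s v p ∧ p.length = k + 1}

/-- The total weight of a walk `p` under the edge weighting `w`:
the sum of `w` over the consecutive pairs of vertices of `p`. -/
def walkWeight (w : V → V → ℝ) (p : List V) : ℝ :=
  ((p.zip p.tail).map fun e => w e.1 e.2).sum

/-- Weighted distance from `s` to `v` under the weighting `w`:
the minimum total weight of a directed path from `s` to `v`. -/
noncomputable def weightedDist (E : V → V → Prop) (w : V → V → ℝ) (s v : V) : ℝ :=
  sInf {c | ∃ p, IsWalk E s v p ∧ p.Nodup ∧ walkWeight w p = c}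

/-- `L` is a linearization of `(G, s)`: `L` is a linear ordering (a duplicate-free list)
of `V \ {s}`, and there exists a positive edge weighting `w` of `G` such that the weighted
distances from `s` of all vertices `≠ s` are pairwise distinct and `L` lists `V \ {s}`
in increasing order of weighted distance from `s`. -/
def IsLinearization (E : V → V → Prop) (s : V) (L : List V) : Prop :=
  L.Nodup ∧ (∀ v, v ∈ L ↔ v ≠ s) ∧
  ∃ w : V → V → ℝ,
    (∀ u v, E u v → 0 < w u v) ∧
    (∀ x, x ≠ s → ∀ y, y ≠ s → x ≠ y →
      weightedDist E w s x ≠ weightedDist E w s y) ∧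
    L.Pairwise (fun x y => weightedDist E w s x < weightedDist E w s y)

/-- `ℓ(G, s)`: the number of linearizations of `(G, s)`. -/
noncomputable def numLinearizations (E : V → V → Prop) (s : V) : ℕ :=
  {L : List V | IsLinearization E s L}.ncard

/-- `T` is a spanning arborescence of `(G, s)`: a subset of the edges of `G` such that
every vertex `v ≠ s` is reachable from `s` in `T` and has exactly one incoming `T`-edge,
and `s` has no incoming `T`-edge. -/
def IsArborescence (E T : V → V → Prop) (s : V) : Prop :=
  (∀ u v, T u v → E u v) ∧
  (∀ u, ¬ T u s) ∧
  (∀ v, v ≠ s → DiReachable T s v ∧ ∃! u, T u v)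


section AuxLinearization

lemma walkWeight_cons_cons (w : V → V → ℝ) (a b : V) (q : List V) :
    walkWeight w (a :: b :: q) = w a b + walkWeight w (b :: q) := by
  simp [walkWeight]

lemma walkWeight_telescope (f : V → ℝ) (g : V → V → ℝ) :
    ∀ (q : List V) (a : V),
    walkWeight (fun u v => f v - f u + g u v) (a :: q)
      = f ((a :: q).getLast (by simp)) - f a + walkWeight g (a :: q) := by
  intro q
  induction q with
  | nil => intro a; simp [walkWeight]
  | cons b q ih =>
    intro a
    rw [walkWeight_cons_cons, walkWeight_cons_cons, ih b, List.getLast_cons_cons]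
    ring

lemma mem_zip_tail_of_chain' {R : V → V → Prop} :
    ∀ {p : List V}, p.Chain' R → ∀ e ∈ p.zip p.tail, R e.1 e.2 := by
  intro p
  induction p with
  | nil => intro _ e he; simp at he
  | cons a q ih =>
    intro h e he
    cases q with
    | nil => simp at he
    | cons b r =>
      simp only [List.Chain', List.isChain_cons_cons] at h
      simp only [List.tail_cons, List.zip_cons_cons, List.mem_cons] at he
      rcases he with rfl | he
      · exact h.1
      · exact ih h.2 e he

end AuxLinearization

/--
Let `G = (V, E)` be a finite directed graph with a designated source `s`
from which every vertex is reachable, and let `T ⊆ E` be a spanning arborescence rooted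
at `s`.  Let `L` be a linear ordering of `V \ {s}` such that for every edge `(u, v) ∈ T`
with `u ≠ s`, `u` precedes `v` in `L`.  Then `L` is a linearization of `(G, s)`.
-/
theorem isLinearization_of_respects_arborescence
    [Fintype V] [DecidableEq V] (E T : V → V → Prop) (s : V)
    (hreach : ∀ v, DiReachable E s v)
    (hT : IsArborescence E T s)
    (L : List V) (hnd : L.Nodup) (hmem : ∀ v, v ∈ L ↔ v ≠ s)
    (horder : ∀ u v, T u v → u ≠ s → L.idxOf u < L.idxOf v) :
    IsLinearization E s L := by
  classical
  set n : ℝ := (L.length : ℝ) with hn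
  set f : V → ℝ := fun v => if v = s then 0 else (L.idxOf v : ℝ) + 1 with hf
  set g : V → V → ℝ := fun u v => if T u v then 0 else n + 2 with hg
  set w : V → V → ℝ := fun u v => f v - f u + g u v with hw
  have hfs : f s = 0 := by simp [hf]
  have hf_lb : ∀ v, v ≠ s → 1 ≤ f v := by
    intro v hv; simp only [hf, if_neg hv]
    linarith [Nat.cast_nonneg (L.idxOf v) (α := ℝ)]
  have hf_ub : ∀ v, f v ≤ n := by
    intro v
    by_cases hv : v = s
    · rw [hv, hfs, hn]; positivity
    · simp only [hf, if_neg hv]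
      have : L.idxOf v < L.length := List.idxOf_lt_length_iff.mpr ((hmem v).mpr hv)
      have : (L.idxOf v : ℝ) + 1 ≤ (L.length : ℝ) := by exact_mod_cast this
      linarith
  have hf_nonneg : ∀ v, 0 ≤ f v := by
    intro v
    by_cases hv : v = s
    · simp [hv, hfs]
    · linarith [hf_lb v hv]
  have hfT : ∀ u v, T u v → f u < f v := by
    intro u v huv
    have hvs : v ≠ s := by rintro rfl; exact hT.2.1 u huv
    by_cases hus : u = s
    · subst hus; rw [hfs]; linarith [hf_lb v hvs]
    · have := horder u v huv hus
      simp only [hf, if_neg hus, if_neg hvs]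
      have : (L.idxOf u : ℝ) < (L.idxOf v : ℝ) := by exact_mod_cast this
      linarith
  have hg_nonneg : ∀ u v, 0 ≤ g u v := by
    intro u v; simp only [hg]
    split
    · exact le_refl 0
    · rw [hn]; positivity
  have hwpos : ∀ u v, E u v → 0 < w u v := by
    intro u v _
    simp only [hw, hg]
    split
    · have := hfT u v (by assumption); linarith
    · have h1 := hf_nonneg v
      have h2 := hf_ub u
      linarith
  -- walkWeight of a walk from s to v
  have hww_lb : ∀ v p, IsWalk E s v p → f v ≤ walkWeight w p := by
    intro v p hp
    obtain ⟨hc, hh, hl⟩ := hp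
    cases p with
    | nil => simp at hh
    | cons a q =>
      have ha : a = s := by simpa using hh
      have hfa : f a = 0 := by rw [ha, hfs]
      have hlast : (a :: q).getLast (by simp) = v := by
        rw [List.getLast?_eq_getLast (l := a :: q) (by simp)] at hl
        simpa using hl
      have := walkWeight_telescope f g q a
      rw [hw]
      rw [this, hlast, hfa]
      have hg0 : 0 ≤ walkWeight g (a :: q) := by
        apply List.sum_nonneg
        intro x hx
        simp only [List.mem_map] at hx
        obtain ⟨e, _, rfl⟩ := hx
        exact hg_nonneg e.1 e.2
      linarith
  have hww_T : ∀ v p, IsWalk T s v p → walkWeight w p = f v := by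
    intro v p hp
    obtain ⟨hc, hh, hl⟩ := hp
    cases p with
    | nil => simp at hh
    | cons a q =>
      have ha : a = s := by simpa using hh
      have hfa : f a = 0 := by rw [ha, hfs]
      have hlast : (a :: q).getLast (by simp) = v := by
        rw [List.getLast?_eq_getLast (l := a :: q) (by simp)] at hl
        simpa using hl
      have := walkWeight_telescope f g q a
      rw [hw, this, hlast, hfa]
      have hg0 : walkWeight g (a :: q) = 0 := by
        apply List.sum_eq_zero
        intro x hx
        simp only [List.mem_map] at hx
        obtain ⟨e, he, rfl⟩ := hx
        have := mem_zip_tail_of_chain' hc e he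
        simp [hg, this]
      rw [hg0]; ring
  have hdist : ∀ v, v ≠ s → weightedDist E w s v = f v := by
    intro v hv
    obtain ⟨p, hp⟩ := (hT.2.2 v hv).1
    have hpE : IsWalk E s v p := ⟨hp.1.imp (fun {a b} h => hT.1 a b h), hp.2.1, hp.2.2⟩
    have hpnd : p.Nodup := by
      have hmono : p.Chain' (fun a b => f a < f b) := hp.1.imp (fun {a b} h => hfT a b h)
      haveI : IsTrans V (fun a b => f a < f b) := ⟨fun _ _ _ => lt_trans⟩
      have hpw : p.Pairwise (fun a b => f a < f b) := List.isChain_iff_pairwise.mp hmono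
      exact hpw.imp (fun {a b} h => ne_of_apply_ne f (ne_of_lt h))
    apply le_antisymm
    · apply csInf_le
      · exact ⟨f v, fun c hc => by obtain ⟨q, hq, _, rfl⟩ := hc; exact hww_lb v q hq⟩
      · exact ⟨p, hpE, hpnd, hww_T v p hp⟩
    · apply le_csInf
      · exact ⟨walkWeight w p, p, hpE, hpnd, rfl⟩
      · intro c hc; obtain ⟨q, hq, _, rfl⟩ := hc; exact hww_lb v q hq
  refine ⟨hnd, hmem, w, hwpos, ?_, ?_⟩
  · intro x hx y hy hxy
    rw [hdist x hx, hdist y hy]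
    simp only [hf, if_neg hx, if_neg hy]
    intro h
    have : L.idxOf x = L.idxOf y := by
      have : (L.idxOf x : ℝ) = (L.idxOf y : ℝ) := by linarith
      exact_mod_cast this
    exact hxy ((List.idxOf_inj ((hmem x).mpr hx)).mp this)
  · rw [List.pairwise_iff_getElem]
    intro i j hi hj hij
    have hxi : L[i] ≠ s := (hmem _).mp (List.getElem_mem hi)
    have hxj : L[j] ≠ s := (hmem _).mp (List.getElem_mem hj)
    rw [hdist _ hxi, hdist _ hxj]
    simp only [hf, if_neg hxi, if_neg hxj]
    have h1 : L.idxOf L[i] = i := List.Nodup.idxOf_getElem hnd i hi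
    have h2 : L.idxOf L[j] = j := List.Nodup.idxOf_getElem hnd j hj
    rw [h1, h2]
    have : (i : ℝ) < (j : ℝ) := by exact_mod_cast hij
    linarith
end

section
/- Fix m ≥ 2. Consider the following game against a hidden bijection π : Fin m → Fin m (π(i) is the value stored at position i): a query is a nonempty subset S ⊆ Fin m, and the answer to query S is the unique position in S at which π attains its maximum over S. A deterministic strategy is a function that, given the finite sequence of answers received so far, either outputs the next query, or stops and outputs a guess g ∈ Fin m. Then every deterministic strategy that stops after at most m − 2 queries fails on some input: there exists a bijection π of Fin m such that the strategy's guess g, when played against π, satisfies π(g) ≠ min of the values, i.e., g is not the position of the minimum element. -/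
/-!
Run the strategy against the identity. It receives at most `m - 2` answers, so some position `c`
is neither an answer nor the guess `g`. Now lower the value at `c` to the bottom and shift the
smaller values up by one (the cycle `Fin.cycleRange c`): the relative order of all other
positions is unchanged and `c` only sinks, so every answer stays the same, the strategy runs
exactly as before and again guesses `g`, while `c` now carries the minimum.
-/

/-- The answer to a query `S` against the hidden assignment `π` of values to positions:
the position in `S` at which `π` attains its maximum over `S` (it is unique when `π` is
injective on a nonempty `S`); `none` if no such position exists. -/
noncomputable def gameAnswer {m : ℕ} (π : Fin m → Fin m) (S : Finset (Fin m)) :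
    Option (Fin m) :=
  if h : ∃ i, i ∈ S ∧ ∀ j ∈ S, π j ≤ π i then some h.choose else none

/-- The history of answers received by the deterministic strategy `strat` after `k` rounds
of interaction against the hidden assignment `π`.  In each round, the strategy, given the
answers so far, either outputs the next query (`Sum.inl S`) — and the answer to `S` is
appended to the history — or stops with a guess (`Sum.inr g`), after which the history no
longer changes. -/
noncomputable def gameHist {m : ℕ} (strat : List (Fin m) → Finset (Fin m) ⊕ Fin m)
    (π : Fin m → Fin m) : ℕ → List (Fin m)
  | 0 => []
  | k + 1 =>
    match strat (gameHist strat π k) with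
    | Sum.inl S => gameHist strat π k ++ (gameAnswer π S).toList
    | Sum.inr _ => gameHist strat π k

theorem List.exists_notMem_ne_of_length_add_one_lt {α : Type*} [Fintype α] (l : List α) (g : α)
    (h : l.length + 1 < Fintype.card α) : ∃ c, c ∉ l ∧ c ≠ g := by
  classical
  have hcard : (insert g l.toFinset).card < Finset.univ.card := calc
    (insert g l.toFinset).card ≤ l.toFinset.card + 1 := Finset.card_insert_le _ _
    _ ≤ l.length + 1 := by grw [List.toFinset_card_le]
    _ < Finset.univ.card := h
  obtain ⟨c, -, hc⟩ := Finset.exists_mem_notMem_of_card_lt_card hcard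
  simp only [Finset.mem_insert, List.mem_toFinset, not_or] at hc
  exact ⟨c, hc.2, hc.1⟩

namespace Fin

theorem cycleRange_le_cycleRange {n : ℕ} {i v w : Fin n} (hvw : v ≤ w) (hw : w ≠ i) :
    cycleRange i v ≤ cycleRange i w := by
  rw [le_def] at hvw ⊢
  rcases lt_or_gt_of_ne hw with hwi | hiw
  · rw [coe_cycleRange_of_lt hwi, coe_cycleRange_of_lt (lt_of_le_of_lt hvw hwi)]
    omega
  · rw [cycleRange_of_gt hiw]
    rcases le_or_gt v i with hvi | hiv
    · rw [coe_cycleRange_of_le hvi]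
      have := lt_def.1 hiw
      have := le_def.1 hvi
      split_ifs <;> omega
    · rwa [cycleRange_of_gt hiv]

end Fin

section Game

variable {m : ℕ}

theorem gameAnswer_eq_none_iff (π : Fin m → Fin m) (S : Finset (Fin m)) :
    gameAnswer π S = none ↔ S = ∅ := by
  rw [gameAnswer, dite_eq_right_iff, ← Finset.not_nonempty_iff_eq_empty]
  simp only [reduceCtorEq, imp_false, not_exists, not_and]
  refine ⟨fun h ⟨i, hi⟩ => ?_, fun hS i hi _ => hS ⟨i, hi⟩⟩
  obtain ⟨a, ha, hmax⟩ := S.exists_max_image π ⟨i, hi⟩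
  exact h a ha hmax

theorem gameAnswer_eq_some_iff {π : Fin m → Fin m} (hπ : Function.Injective π)
    {S : Finset (Fin m)} {a : Fin m} :
    gameAnswer π S = some a ↔ a ∈ S ∧ ∀ j ∈ S, π j ≤ π a := by
  have hchoose (h : ∃ i, i ∈ S ∧ ∀ j ∈ S, π j ≤ π i) := h.choose_spec
  rw [gameAnswer]
  constructor
  · intro h
    split_ifs at h with hex
    · exact Option.some_injective _ h ▸ hchoose hex
  · rintro ⟨ha, hmax⟩
    have hex : ∃ i, i ∈ S ∧ ∀ j ∈ S, π j ≤ π i := ⟨a, ha, hmax⟩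
    rw [dif_pos hex, Option.some_inj]
    exact hπ ((hchoose hex).2 a ha |>.antisymm' (hmax _ (hchoose hex).1))

theorem gameAnswer_eq_of_le_imp_le {π π' : Fin m → Fin m} (hπ : Function.Injective π)
    (hπ' : Function.Injective π') {c : Fin m}
    (hle : ∀ j a, a ≠ c → π j ≤ π a → π' j ≤ π' a) {S : Finset (Fin m)}
    (hS : gameAnswer π S ≠ some c) : gameAnswer π' S = gameAnswer π S := by
  cases h : gameAnswer π S with
  | none => rwa [gameAnswer_eq_none_iff] at h ⊢
  | some a =>
    have hac : a ≠ c := by rintro rfl; exact hS h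
    obtain ⟨ha, hmax⟩ := (gameAnswer_eq_some_iff hπ).1 h
    exact (gameAnswer_eq_some_iff hπ').2 ⟨ha, fun j hj => hle j a hac (hmax j hj)⟩

variable (strat : List (Fin m) → Finset (Fin m) ⊕ Fin m) (π : Fin m → Fin m)

theorem gameHist_prefix_succ (n : ℕ) : gameHist strat π n <+: gameHist strat π (n + 1) := by
  rw [gameHist]
  split
  · exact List.prefix_append _ _
  · exact List.prefix_refl _

theorem gameHist_length_le (n : ℕ) : (gameHist strat π n).length ≤ n := by
  induction n with
  | zero => simp [gameHist]
  | succ n ih =>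
    rw [gameHist]
    split
    · grw [List.length_append, ih, Option.length_toList_le]
    · omega

theorem gameHist_eq_of_gameAnswer_eq {π' : Fin m → Fin m} {c : Fin m}
    (h : ∀ S, gameAnswer π S ≠ some c → gameAnswer π' S = gameAnswer π S) {n : ℕ}
    (hc : c ∉ gameHist strat π n) : gameHist strat π' n = gameHist strat π n := by
  induction n with
  | zero => rfl
  | succ n ih =>
    have hsame := ih fun hc' => hc ((gameHist_prefix_succ strat π n).subset hc')
    rw [gameHist, gameHist, hsame]
    split
    · next S hS =>
      rw [gameHist, hS, List.mem_append, Option.mem_toList] at hc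
      rw [h S fun h' => hc (Or.inr h')]
    · rfl

end Game

theorem exists_hidden_perm_fooling_short_strategy_general
    (m : ℕ) (hm : 2 ≤ m)
    (strat : List (Fin m) → Finset (Fin m) ⊕ Fin m)
    (hstop : ∀ π : Equiv.Perm (Fin m), ∃ g : Fin m,
      strat (gameHist strat (⇑π) (m - 2)) = Sum.inr g) :
    ∃ π : Equiv.Perm (Fin m), ∀ g : Fin m,
      strat (gameHist strat (⇑π) (m - 2)) = Sum.inr g → ∃ j, π j < π g := by
  obtain ⟨g, hg⟩ := hstop 1
  rw [Equiv.Perm.coe_one] at hg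
  obtain ⟨c, hcH, hcg⟩ := List.exists_notMem_ne_of_length_add_one_lt (gameHist strat id (m - 2)) g
    (by grw [gameHist_length_le, Fintype.card_fin]; omega)
  have : NeZero m := ⟨by omega⟩
  have hsame : gameHist strat (Fin.cycleRange c) (m - 2) = gameHist strat id (m - 2) :=
    gameHist_eq_of_gameAnswer_eq strat id
      (fun _ hS => gameAnswer_eq_of_le_imp_le Function.injective_id (Equiv.injective _)
        (fun _ _ hac hle => Fin.cycleRange_le_cycleRange hle hac) hS) hcH
  refine ⟨Fin.cycleRange c, fun g' hg' => ⟨c, ?_⟩⟩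
  rw [hsame, hg, Sum.inr.injEq] at hg'
  subst hg'
  rw [Fin.cycleRange_self, Fin.pos_iff_ne_zero, ← Fin.cycleRange_self c]
  exact (Fin.cycleRange c).injective.ne hcg.symm

/--
Fix `m ≥ 2`.  Consider the game against a hidden bijection
`π : Fin m → Fin m` where a query is a nonempty subset `S ⊆ Fin m` and the answer is the
unique position of `S` at which `π` attains its maximum over `S`.  A deterministic
strategy maps each finite sequence of received answers either to the next query or to a
final guess.  Then every deterministic strategy that always queries nonempty sets and,
against every bijection, stops with a guess after at most `m − 2` queries, fails on some
input: there exists a bijection `π` such that the strategy's guess `g` against `π` is not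
the position of the minimum element, i.e. some position carries a strictly smaller value.
-/
theorem exists_hidden_perm_fooling_short_strategy
    (m : ℕ) (hm : 2 ≤ m)
    (strat : List (Fin m) → Finset (Fin m) ⊕ Fin m)
    (hque : ∀ h S, strat h = Sum.inl S → S.Nonempty)
    (hstop : ∀ π : Equiv.Perm (Fin m), ∃ g : Fin m,
      strat (gameHist strat (⇑π) (m - 2)) = Sum.inr g) :
    ∃ π : Equiv.Perm (Fin m), ∀ g : Fin m,
      strat (gameHist strat (⇑π) (m - 2)) = Sum.inr g → ∃ j, π j < π g :=
  exists_hidden_perm_fooling_short_strategy_general m hm strat hstop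
end
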